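/- There exists a constant C > 0 such that for all n ≥ 1, |m(n)/φ(n) − (2n−1)| ≤ C/n; in particular m(n)/φ(n) = 2n − 1 + O(1/n) as n → ∞. -/

import Mathlib

/-!
With `M = ∑ m(n) xⁿ` and `F = ∑ φ(n) xⁿ`, the recurrence says `M = 1 + xM² + xM + 2x²M'`, an
equation that determines `M`; using `φ(n+1) = (2n+1) φ(n)`, a direct computation shows that
`(F - 1)/(xF)` solves it as well. Hence `M F = (F - 1)/x`, i.e. `∑_{k ≤ n} m(k) φ(n-k) = φ(n+1)`, so
`m(n) = (2n+1) φ(n) - P(n)` with `P(n) = ∑_{k < n} m(k) φ(n-k)`, and it remains to show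
`P(n) = 2 φ(n) + O(φ(n)/n)`. The two end terms of `P(n)` give `φ(n) + m(n-1) = 2 φ(n) - P(n-1)`,
and `m(k) ≤ φ(k+1)` dominates `P(n)` by `Q(n) = ∑_{k < n} φ(k+1) φ(n-k)`, which satisfies
`Q(n+1) = φ(n+1) + (n+2) Q(n)` and therefore `Q(n) ≤ (2 + O(1/n)) φ(n)`.
-/

/-- `φ(n) = (2n−1)!! = (2n)!/(2^n·n!)` (the division is exact). -/
def phi (n : ℕ) : ℕ := (2 * n).factorial / (2 ^ n * n.factorial)

open PowerSeries Finset
open scoped Nat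

lemma phi_succ_eq_doubleFactorial (n : ℕ) : phi (n + 1) = (2 * n + 1)‼ := by
  rw [phi, show 2 * (n + 1) = 2 * n + 1 + 1 by ring, Nat.factorial_eq_mul_doubleFactorial,
    show 2 * n + 1 + 1 = 2 * (n + 1) by ring, Nat.doubleFactorial_two_mul,
    Nat.mul_div_cancel_left _ (by positivity)]

lemma phi_zero : phi 0 = 1 := rfl

lemma phi_one : phi 1 = 1 := rfl

lemma phi_succ (n : ℕ) : phi (n + 1) = (2 * n + 1) * phi n := by
  cases n with
  | zero => rfl
  | succ n =>
    rw [phi_succ_eq_doubleFactorial, phi_succ_eq_doubleFactorial,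
      show 2 * (n + 1) + 1 = 2 * n + 1 + 2 by ring, Nat.doubleFactorial_add_two]

lemma phi_pos (n : ℕ) : 0 < phi n := by
  induction n with
  | zero => exact Nat.one_pos
  | succ n ih => rw [phi_succ]; positivity

section MapEquation

variable {R : Type*} [CommSemiring R]

lemma coeff_X_mul_derivative (f : R⟦X⟧) (n : ℕ) :
    coeff n (X * d⁄dX R f) = n * coeff n f := by
  cases n with
  | zero => simp
  | succ n => rw [coeff_succ_X_mul, coeff_derivative, mul_comm]; push_cast; rfl

def SolvesMapEquation (A : R⟦X⟧) : Prop :=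
  1 + X * (A ^ 2 + A + 2 * X * d⁄dX R A) = A

lemma solvesMapEquation_iff (A : R⟦X⟧) :
    SolvesMapEquation A ↔ constantCoeff A = 1 ∧ ∀ n, coeff (n + 1) A =
      ∑ k ∈ range (n + 1), coeff k A * coeff (n - k) A + (2 * n + 1) * coeff n A := by
  have hcoeff : ∀ n, coeff (n + 1) (1 + X * (A ^ 2 + A + 2 * X * d⁄dX R A)) =
      ∑ k ∈ range (n + 1), coeff k A * coeff (n - k) A + (2 * n + 1) * coeff n A := by
    intro n
    rw [map_add, coeff_one, if_neg n.succ_ne_zero, zero_add, coeff_succ_X_mul, map_add, map_add,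
      sq, coeff_mul, Nat.sum_antidiagonal_eq_sum_range_succ_mk, mul_assoc, ← map_ofNat C 2,
      coeff_C_mul, coeff_X_mul_derivative]
    ring
  rw [SolvesMapEquation, PowerSeries.ext_iff, ← coeff_zero_eq_constantCoeff_apply]
  constructor
  · intro h
    refine ⟨?_, fun n => ?_⟩
    · rw [← h 0]; simp
    · rw [← h (n + 1), hcoeff]
  · rintro ⟨h0, h⟩ n
    cases n with
    | zero => simp [h0]
    | succ n => rw [hcoeff, h]

theorem SolvesMapEquation.unique {A B : R⟦X⟧} (hA : SolvesMapEquation A)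
    (hB : SolvesMapEquation B) : A = B := by
  rw [solvesMapEquation_iff] at hA hB
  ext n
  induction n using Nat.strong_induction_on with
  | _ n ih =>
    cases n with
    | zero => simp only [coeff_zero_eq_constantCoeff_apply, hA.1, hB.1]
    | succ n =>
      rw [hA.2, hB.2, ih n (by omega)]
      congr 1
      refine sum_congr rfl fun k hk => ?_
      rw [ih k (by simp at hk; omega), ih (n - k) (by omega)]

end MapEquation

section PhiSeries

variable (K : Type*) [Field K]

noncomputable def phiSeries : K⟦X⟧ := mk fun n => (phi n : K)

noncomputable def phiShiftSeries : K⟦X⟧ := mk fun n => (phi (n + 1) : K)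

lemma X_mul_phiShiftSeries : X * phiShiftSeries K = phiSeries K - 1 := by
  ext n
  cases n with
  | zero => simp [phiSeries, phi_zero]
  | succ n => simp [phiShiftSeries, phiSeries, coeff_succ_X_mul]

lemma phiShiftSeries_eq_add_derivative :
    phiShiftSeries K = phiSeries K + 2 * X * d⁄dX K (phiSeries K) := by
  ext n
  rw [mul_assoc, ← map_ofNat C 2, map_add, coeff_C_mul, coeff_X_mul_derivative]
  simp only [phiShiftSeries, phiSeries, coeff_mk, phi_succ]
  push_cast
  ring

lemma constantCoeff_phiSeries : constantCoeff (phiSeries K) = 1 := by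
  simp [phiSeries, phi_zero]

variable {K} in
theorem SolvesMapEquation.mul_phiSeries {A : K⟦X⟧} (hA : SolvesMapEquation A) :
    A * phiSeries K = phiShiftSeries K := by
  set F := phiSeries K
  set H := phiShiftSeries K
  set G := H * F⁻¹
  have hF0 : constantCoeff F = 1 := constantCoeff_phiSeries K
  have hF : F ≠ 0 := fun h => by simp [h] at hF0
  have hGF : G * F = H := by
    rw [mul_assoc, PowerSeries.inv_mul_cancel _ (by simp [hF0]), mul_one]
  have hGF' : d⁄dX K G * F + G * d⁄dX K F = d⁄dX K H := by
    rw [← hGF, Derivation.leibniz (D := d⁄dX K) (a := G), smul_eq_mul, smul_eq_mul]; ring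
  have hH : H = F + 2 * X * d⁄dX K F := phiShiftSeries_eq_add_derivative K
  have hH' : H + X * d⁄dX K H = d⁄dX K F := by
    have := congrArg (d⁄dX K) (X_mul_phiShiftSeries K)
    rwa [Derivation.leibniz, map_sub, derivative_X, derivative_one, sub_zero, smul_eq_mul,
      smul_eq_mul, mul_one, add_comm] at this
  have hG : SolvesMapEquation G := by
    rw [SolvesMapEquation]
    -- multiplied by `F²`, the equation for `G = H / F` follows from the four relations above
    apply mul_left_cancel₀ (pow_ne_zero 2 hF)
    linear_combination (X * (G * F + H) + X * F - 2 * X ^ 2 * d⁄dX K F - F) * hGF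
      + 2 * X ^ 2 * F * hGF' + (X * H - F) * hH + 2 * X * F * hH'
  rw [hA.unique hG, hGF]

end PhiSeries

def convPhi (a : ℕ → ℕ) (n : ℕ) : ℕ := ∑ k ∈ range n, a k * phi (n - k)

theorem convPhi_add_eq_phi_succ (m : ℕ → ℕ) (hm0 : m 0 = 1)
    (hm : ∀ n : ℕ, m (n + 1) =
      (∑ k ∈ Finset.range (n + 1), m k * m (n - k)) + (2 * (n + 1) - 1) * m n) (n : ℕ) :
    convPhi m n + m n = phi (n + 1) := by
  have hM : SolvesMapEquation (mk fun k => (m k : ℚ)) := by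
    rw [solvesMapEquation_iff]
    refine ⟨by simp [hm0], fun n => ?_⟩
    simp only [coeff_mk, hm n, show 2 * (n + 1) - 1 = 2 * n + 1 by omega]
    push_cast
    rfl
  have := congrArg (coeff n) hM.mul_phiSeries
  rw [coeff_mul, Nat.sum_antidiagonal_eq_sum_range_succ_mk, sum_range_succ] at this
  simp only [phiSeries, phiShiftSeries, coeff_mk, Nat.sub_self, phi_zero, Nat.cast_one,
    mul_one] at this
  rw [convPhi]
  exact_mod_cast this

lemma convPhi_mono {a b : ℕ → ℕ} (h : ∀ k, a k ≤ b k) (n : ℕ) : convPhi a n ≤ convPhi b n :=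
  sum_le_sum fun k _ => Nat.mul_le_mul_right _ (h k)

def phiConvPhi (n : ℕ) : ℕ := convPhi (fun k => phi (k + 1)) n

lemma phiConvPhi_succ (n : ℕ) : phiConvPhi (n + 1) = phi (n + 1) + (n + 2) * phiConvPhi n := by
  have hlast : phiConvPhi (n + 1) =
      ∑ k ∈ range n, (2 * (n - k) + 1) * (phi (k + 1) * phi (n - k)) + phi (n + 1) := by
    rw [phiConvPhi, convPhi, sum_range_succ, Nat.add_sub_cancel_left, phi_one, mul_one]
    congr 1
    refine sum_congr rfl fun k hk => ?_
    rw [show n + 1 - k = n - k + 1 by have := mem_range.mp hk; omega, phi_succ (n - k)]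
    ring
  have hfirst : phiConvPhi (n + 1) =
      ∑ k ∈ range n, (2 * k + 3) * (phi (k + 1) * phi (n - k)) + phi (n + 1) := by
    rw [phiConvPhi, convPhi, sum_range_succ', phi_one, Nat.sub_zero, one_mul]
    congr 1
    refine sum_congr rfl fun k _ => ?_
    rw [Nat.add_sub_add_right, phi_succ (k + 1)]
    ring
  have hsum : ∑ k ∈ range n, (2 * (n - k) + 1) * (phi (k + 1) * phi (n - k)) +
      ∑ k ∈ range n, (2 * k + 3) * (phi (k + 1) * phi (n - k)) = 2 * ((n + 2) * phiConvPhi n) := by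
    rw [← sum_add_distrib, phiConvPhi, convPhi, mul_sum, mul_sum]
    refine sum_congr rfl fun k hk => ?_
    have : k < n := mem_range.mp hk
    rw [← add_mul, show 2 * (n - k) + 1 + (2 * k + 3) = 2 * (n + 2) by omega]
    ring
  omega

lemma phiConvPhi_le (n : ℕ) : (n + 4) * phiConvPhi n ≤ (2 * n + 72) * phi n := by
  obtain hn | hn := lt_or_ge n 2
  · interval_cases n <;> decide
  induction n, hn using Nat.le_induction with
  | base => decide
  | succ n hn ih =>
    suffices (n + 4) * ((n + 1 + 4) * phiConvPhi (n + 1)) ≤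
        (n + 4) * ((2 * (n + 1) + 72) * phi (n + 1)) from
      Nat.le_of_mul_le_mul_left this (by omega)
    calc (n + 4) * ((n + 1 + 4) * phiConvPhi (n + 1))
        = (n + 4) * (n + 5) * (2 * n + 1) * phi n
            + (n + 5) * (n + 2) * ((n + 4) * phiConvPhi n) := by
          rw [phiConvPhi_succ, phi_succ]; ring
      _ ≤ (n + 4) * (n + 5) * (2 * n + 1) * phi n + (n + 5) * (n + 2) * ((2 * n + 72) * phi n) := by
          gcongr
      _ = ((n + 4) * (n + 5) * (2 * n + 1) + (n + 5) * (n + 2) * (2 * n + 72)) * phi n := by ring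
      _ ≤ ((n + 4) * (2 * n + 74) * (2 * n + 1)) * phi n := by gcongr; nlinarith
      _ = (n + 4) * ((2 * (n + 1) + 72) * phi (n + 1)) := by rw [phi_succ]; ring

section Bounds

variable {m : ℕ → ℕ} (hm : ∀ n, convPhi m n + m n = phi (n + 1))
include hm

lemma le_phi_succ (k : ℕ) : m k ≤ phi (k + 1) := (Nat.le_add_left _ _).trans_eq (hm k)

lemma two_mul_phi_le (n : ℕ) : 2 * phi (n + 2) ≤ convPhi m (n + 2) + convPhi m (n + 1) := by
  have hm0 : m 0 = 1 := by simpa [convPhi, phi_one] using hm 0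
  have hlast : convPhi m (n + 1) + m (n + 1) = phi (n + 2) := hm (n + 1)
  have : phi (n + 2) + m (n + 1) ≤ convPhi m (n + 2) := by
    rw [convPhi, sum_range_succ, sum_range_succ', hm0, show n + 2 - (n + 1) = 1 by omega, phi_one]
    simp
  omega

lemma mul_convPhi_le (n : ℕ) : n * convPhi m n ≤ (2 * n + 72) * phi n :=
  calc n * convPhi m n ≤ (n + 4) * phiConvPhi n :=
        Nat.mul_le_mul (by omega) (convPhi_mono (le_phi_succ hm) n)
    _ ≤ (2 * n + 72) * phi n := phiConvPhi_le n

lemma two_mul_mul_phi_le (n : ℕ) : 2 * n * phi n ≤ n * convPhi m n + 72 * phi n := by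
  match n with
  | 0 => simp
  | 1 => simp [phi_one]
  | n + 2 =>
    have hprev : (n + 2) * convPhi m (n + 1) ≤ 72 * phi (n + 2) :=
      calc (n + 2) * convPhi m (n + 1) ≤ (n + 1 + 4) * phiConvPhi (n + 1) :=
            Nat.mul_le_mul (by omega) (convPhi_mono (le_phi_succ hm) (n + 1))
        _ ≤ (2 * (n + 1) + 72) * phi (n + 1) := phiConvPhi_le (n + 1)
        _ ≤ 72 * (2 * (n + 1) + 1) * phi (n + 1) := by gcongr; omega
        _ = 72 * phi (n + 2) := by rw [phi_succ (n + 1)]; ring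
    have := Nat.mul_le_mul_left (n + 2) (two_mul_phi_le hm n)
    linarith

end Bounds

/-- There is a constant `C > 0` such that for all `n ≥ 1`,
`|m(n)/φ(n) − (2n−1)| ≤ C/n`; in particular `m(n)/φ(n) = 2n − 1 + O(1/n)`. -/
theorem maps_asymptotic_ratio
    (m : ℕ → ℕ) (hm0 : m 0 = 1)
    (hm : ∀ n : ℕ, m (n + 1) =
      (∑ k ∈ Finset.range (n + 1), m k * m (n - k)) + (2 * (n + 1) - 1) * m n) :
    ∃ C : ℝ, 0 < C ∧ ∀ n : ℕ, 1 ≤ n →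
      |(m n : ℝ) / (phi n : ℝ) - (2 * (n : ℝ) - 1)| ≤ C / n := by
  have hconv := convPhi_add_eq_phi_succ m hm0 hm
  refine ⟨72, by norm_num, fun n hn => ?_⟩
  have hφ : (0 : ℝ) < phi n := by exact_mod_cast phi_pos n
  have hnpos : (0 : ℝ) < n := by exact_mod_cast hn
  have hsum : (m n : ℝ) + convPhi m n = (2 * n + 1) * phi n := by
    exact_mod_cast (add_comm _ _).trans ((hconv n).trans (phi_succ n))
  have hupper : (n : ℝ) * convPhi m n ≤ (2 * n + 72) * phi n := by
    exact_mod_cast mul_convPhi_le hconv n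
  have hlower : 2 * (n : ℝ) * phi n ≤ n * convPhi m n + 72 * phi n := by
    exact_mod_cast two_mul_mul_phi_le hconv n
  rw [show (m n : ℝ) / phi n - (2 * n - 1) = (2 * phi n - convPhi m n) / phi n by
      field_simp; linarith,
    abs_div, abs_of_pos hφ, div_le_div_iff₀ hφ hnpos, ← abs_of_pos hnpos, ← abs_mul]
  exact abs_le.mpr ⟨by linarith, by linarith⟩
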